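/- arXiv:1401.1980 — 9 statements merged into one kernel-verified Lean document; each statement's English description precedes it below -/
import Mathlib

section
/- Z(G) = ⟨a^k, b^{s'}⟩, i.e., the center of G is the subgroup generated by a^k and b^{s'}, where k = m/gcd(r−1, m) and s' is the multiplicative order of r modulo m. -/
/-!
Since `b⁻¹ a b = a ^ r` and `G` is finite, every element of `G` can be written as
`b ^ j * a ^ i` with natural exponents. Such an element commutes with `b` iff
`a ^ (i * (r - 1)) = 1`, i.e. iff the order `k` of `a ^ (r - 1)` divides `i`, and it commutes
with `a` iff `a ^ r ^ j = a`, i.e. iff `r ^ j ≡ 1 [MOD m]`, i.e. iff `s' ∣ j`.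
-/

open Subgroup

section Monoid

variable {M : Type*} [Monoid M] {a b : M} {r : ℕ}

theorem semiconjBy_pow_pow_mul_pow (h : SemiconjBy b (a ^ r) a) (j n : ℕ) :
    SemiconjBy (b ^ j) (a ^ (n * r ^ j)) (a ^ n) := by
  induction j generalizing n with
  | zero => simp
  | succ j ih =>
    have hb : SemiconjBy b (a ^ (n * r ^ (j + 1))) (a ^ (n * r ^ j)) := by
      simpa only [← pow_mul, pow_succ, mul_comm, mul_left_comm] using h.pow_right (n * r ^ j)
    rw [pow_succ]
    exact (ih n).mul_left hb

end Monoid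

section CancelMonoid

variable {M : Type*} [CancelMonoid M] {a b : M} {r : ℕ}

theorem commute_pow_mul_pow_left_iff (h : SemiconjBy b (a ^ r) a) (j i : ℕ) :
    Commute (b ^ j * a ^ i) b ↔ a ^ (i * r) = a ^ i := by
  have hb : b * a ^ (i * r) = a ^ i * b := by simpa using (semiconjBy_pow_pow_mul_pow h 1 i).eq
  have hl : b ^ j * a ^ i * b = b ^ j * b * a ^ (i * r) := by rw [mul_assoc, ← hb, mul_assoc]
  have hr : b * (b ^ j * a ^ i) = b ^ j * b * a ^ i := by rw [← mul_assoc, ← pow_succ', pow_succ]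
  rw [Commute, SemiconjBy, hl, hr, mul_right_inj]

theorem commute_pow_mul_pow_right_iff (h : SemiconjBy b (a ^ r) a) (j i : ℕ) :
    Commute (b ^ j * a ^ i) a ↔ a ^ r ^ j = a := by
  have hb : b ^ j * a ^ r ^ j = a * b ^ j := by simpa using (semiconjBy_pow_pow_mul_pow h j 1).eq
  have hl : b ^ j * a ^ i * a = b ^ j * (a * a ^ i) := by rw [mul_assoc, pow_mul_comm']
  have hr : a * (b ^ j * a ^ i) = b ^ j * (a ^ r ^ j * a ^ i) := by
    rw [← mul_assoc, ← hb, mul_assoc]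
  rw [Commute, SemiconjBy, hl, hr, mul_right_inj, mul_left_inj, eq_comm]

theorem pow_mul_eq_pow_iff_orderOf_pow_dvd (hr : 0 < r) (i : ℕ) :
    a ^ (i * r) = a ^ i ↔ orderOf (a ^ (r - 1)) ∣ i := by
  have hsplit : a ^ (i * r) = (a ^ (r - 1)) ^ i * a ^ i := by
    obtain ⟨q, rfl⟩ := Nat.exists_eq_add_one_of_ne_zero hr.ne'
    rw [← pow_mul, ← pow_add, Nat.add_sub_cancel]
    ring_nf
  rw [hsplit, mul_eq_right, orderOf_dvd_iff_pow_eq_one]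

theorem pow_pow_eq_self_iff_orderOf_dvd (j : ℕ) :
    a ^ r ^ j = a ↔ orderOf (r : ZMod (orderOf a)) ∣ j := by
  rw [orderOf_dvd_iff_pow_eq_one, ← Nat.cast_pow, ← Nat.cast_one, ZMod.natCast_eq_natCast_iff,
    ← pow_eq_pow_iff_modEq, pow_one]

end CancelMonoid

section Group

variable {G : Type*} [Group G] {a b : G} {r : ℕ}

theorem exists_eq_pow_mul_pow_of_closure_eq_top [Finite G] (h : SemiconjBy b (a ^ r) a)
    (hgen : closure ({a, b} : Set G) = ⊤) (g : G) : ∃ j i : ℕ, g = b ^ j * a ^ i := by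
  have hg : g ∈ Submonoid.closure ({a, b} : Set G) := by
    rw [← closure_toSubmonoid_of_finite, hgen]
    trivial
  induction hg using Submonoid.closure_induction with
  | mem x hx =>
    rcases hx with rfl | rfl
    · exact ⟨0, 1, by simp⟩
    · exact ⟨1, 0, by simp⟩
  | one => exact ⟨0, 0, by simp⟩
  | mul x y _ _ ihx ihy =>
    obtain ⟨j, i, rfl⟩ := ihx
    obtain ⟨j', i', rfl⟩ := ihy
    refine ⟨j + j', i * r ^ j' + i', ?_⟩
    calc b ^ j * a ^ i * (b ^ j' * a ^ i') = b ^ j * (a ^ i * b ^ j') * a ^ i' := by group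
      _ = b ^ j * (b ^ j' * a ^ (i * r ^ j')) * a ^ i' := by
        rw [(semiconjBy_pow_pow_mul_pow h j' i).eq]
      _ = b ^ (j + j') * a ^ (i * r ^ j' + i') := by group

theorem mem_center_iff_commute_of_closure_pair_eq_top (hgen : closure ({a, b} : Set G) = ⊤)
    (g : G) : g ∈ center G ↔ Commute g a ∧ Commute g b := by
  simp only [center_eq_iInf hgen, mem_iInf, Set.mem_insert_iff, Set.mem_singleton_iff,
    forall_eq_or_imp, forall_eq, mem_centralizer_singleton_iff, commute_iff_eq]

end Group

theorem center_eq_closure_of_metacyclic_general {G : Type*} [Group G] [Fintype G]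
    (m r : ℕ) (hr : 0 < r)
    (a b : G) (hgen : Subgroup.closure ({a, b} : Set G) = ⊤)
    (hcon : b⁻¹ * a * b = a ^ r)
    (horda : orderOf a = m)
    (k : ℕ) (hk : k = m / Nat.gcd (r - 1) m)
    (s' : ℕ) (hs' : s' = orderOf (r : ZMod m)) :
    Subgroup.center G = Subgroup.closure ({a ^ k, b ^ s'} : Set G) := by
  have h : SemiconjBy b (a ^ r) a := by
    rw [SemiconjBy, ← hcon]
    group
  have hk' : orderOf (a ^ (r - 1)) = k := by rw [orderOf_pow, horda, hk, Nat.gcd_comm]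
  have hcentral (j i : ℕ) : b ^ j * a ^ i ∈ center G ↔ s' ∣ j ∧ k ∣ i := by
    rw [mem_center_iff_commute_of_closure_pair_eq_top hgen, commute_pow_mul_pow_right_iff h,
      commute_pow_mul_pow_left_iff h, pow_pow_eq_self_iff_orderOf_dvd,
      pow_mul_eq_pow_iff_orderOf_pow_dvd hr, horda, hk', hs']
  apply le_antisymm
  · intro g hg
    obtain ⟨j, i, rfl⟩ := exists_eq_pow_mul_pow_of_closure_eq_top h hgen g
    obtain ⟨⟨v, rfl⟩, ⟨u, rfl⟩⟩ := (hcentral j i).1 hg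
    rw [pow_mul, pow_mul]
    exact mul_mem (pow_mem (subset_closure (by simp)) v) (pow_mem (subset_closure (by simp)) u)
  · rw [closure_le]
    rintro x (rfl | rfl)
    · simpa using (hcentral 0 k).2 ⟨dvd_zero s', dvd_rfl⟩
    · simpa using (hcentral s' 0).2 ⟨dvd_rfl, dvd_zero k⟩

/-- For the finite metacyclic group
`G = ⟨a, b | a^m = 1, b^s = a^t, b⁻¹ab = a^r⟩`, the center of `G` is the subgroup
generated by `a^k` and `b^{s'}`, where `k = m / gcd (r-1) m` and `s'` is the
multiplicative order of `r` modulo `m`. -/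
theorem center_eq_closure_of_metacyclic {G : Type*} [Group G] [Fintype G]
    (m s t r : ℕ) (hm : 0 < m) (hs : 0 < s) (ht : 0 < t) (hr : 0 < r)
    (hrsm : r ^ s ≡ 1 [MOD m]) (hmt : m ∣ t * (r - 1))
    (a b : G) (hgen : Subgroup.closure ({a, b} : Set G) = ⊤)
    (ham : a ^ m = 1) (hba : b ^ s = a ^ t) (hcon : b⁻¹ * a * b = a ^ r)
    (horda : orderOf a = m)
    (hordb : ∀ j : ℕ, b ^ j ∈ Subgroup.zpowers a ↔ s ∣ j)
    (k : ℕ) (hk : k = m / Nat.gcd (r - 1) m)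
    (s' : ℕ) (hs' : s' = orderOf (r : ZMod m)) :
    Subgroup.center G = Subgroup.closure ({a ^ k, b ^ s'} : Set G) :=
  center_eq_closure_of_metacyclic_general m r hr a b hgen hcon horda k hk s' hs'
end

section
/- If u and v are integers such that a^u·b^v lies in the center Z(G), then k divides u and s' divides v, where k = m/gcd(r−1, m) and s' is the multiplicative order of r modulo m. -/
/-!
Conjugation by `b` acts on `⟨a⟩` as `x ↦ x ^ r`, hence conjugation by `b ^ n` as `x ↦ x ^ r ^ n`.
If `a ^ u * b ^ v` is central, then `a ^ u` commutes with `b` and `b ^ v` commutes with `a`.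
The first gives `(a ^ (r - 1)) ^ u = 1`, and `a ^ (r - 1)` has order `m / gcd m (r - 1)`;
the second gives `a ^ r ^ |v| = a`, i.e. `r ^ |v| ≡ 1 [MOD m]`.
-/

section Metacyclic

variable {G : Type*} [Group G] {a b : G} {r : ℕ}

theorem Commute.of_mul_mem_center_left {x y z : G} (h : x * y ∈ Subgroup.center G)
    (hzy : Commute z y) : Commute z x := by
  have hzxy : Commute z (x * y) := Subgroup.mem_center_iff.mp h z
  simpa using hzxy.mul_right hzy.inv_right

theorem Commute.of_mul_mem_center_right {x y z : G} (h : x * y ∈ Subgroup.center G)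
    (hzx : Commute z x) : Commute z y := by
  have hzxy : Commute z (x * y) := Subgroup.mem_center_iff.mp h z
  simpa using hzx.inv_right.mul_right hzxy

theorem inv_pow_mul_mul_pow_of_conj_eq_pow (hcon : b⁻¹ * a * b = a ^ r) (n : ℕ) :
    (b ^ n)⁻¹ * a * b ^ n = a ^ r ^ n := by
  induction n with
  | zero => simp
  | succ n ih =>
    calc (b ^ (n + 1))⁻¹ * a * b ^ (n + 1) = b⁻¹ * ((b ^ n)⁻¹ * a * b ^ n) * b := by group
      _ = (b⁻¹ * a * b) ^ r ^ n := by simpa [ih] using (conj_pow (a := b⁻¹) (b := a)).symm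
      _ = a ^ r ^ (n + 1) := by rw [hcon, ← pow_mul, pow_succ']

theorem pow_sub_one_eq_one_of_commute_of_conj_eq_pow {c : G} (hcon : b⁻¹ * c * b = c ^ r)
    (hr : 0 < r) (hbc : Commute b c) : c ^ (r - 1) = 1 := by
  have hfix : c * c ^ (r - 1) = c := by
    rw [← pow_succ', Nat.sub_add_cancel hr, ← hcon, mul_assoc, ← hbc.eq, inv_mul_cancel_left]
  simpa using hfix

theorem div_gcd_dvd_of_commute_zpow [Finite G] (hcon : b⁻¹ * a * b = a ^ r) (hr : 0 < r)
    {u : ℤ} (hu : Commute b (a ^ u)) :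
    ((orderOf a / (orderOf a).gcd (r - 1) : ℕ) : ℤ) ∣ u := by
  have hconu : b⁻¹ * a ^ u * b = (a ^ u) ^ r := by
    simpa [hcon, ← zpow_natCast, ← zpow_mul, mul_comm] using
      (conj_zpow (a := b⁻¹) (b := a) (i := u)).symm
  have := pow_sub_one_eq_one_of_commute_of_conj_eq_pow hconu hr hu
  rw [← orderOf_pow, orderOf_dvd_iff_zpow_eq_one, ← zpow_natCast, ← zpow_mul, mul_comm,
    zpow_mul, zpow_natCast, this]

theorem orderOf_natCast_dvd_of_commute_pow (hcon : b⁻¹ * a * b = a ^ r) {n : ℕ}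
    (hn : Commute a (b ^ n)) : orderOf (r : ZMod (orderOf a)) ∣ n := by
  have hfix : a ^ r ^ n = a ^ 1 := by
    rw [← inv_pow_mul_mul_pow_of_conj_eq_pow hcon n, mul_assoc, hn.eq, inv_mul_cancel_left,
      pow_one]
  apply orderOf_dvd_of_pow_eq_one
  exact_mod_cast (ZMod.natCast_eq_natCast_iff _ _ _).mpr (pow_eq_pow_iff_modEq.mp hfix)

theorem orderOf_natCast_dvd_of_commute_zpow (hcon : b⁻¹ * a * b = a ^ r) {v : ℤ}
    (hv : Commute a (b ^ v)) : (orderOf (r : ZMod (orderOf a)) : ℤ) ∣ v := by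
  have hvabs : Commute a (b ^ v.natAbs) := by
    rcases Int.natAbs_eq v with h | h
    · rwa [h, zpow_natCast] at hv
    · rwa [h, zpow_neg, zpow_natCast, Commute.inv_right_iff] at hv
  exact Int.dvd_natAbs.mp (Int.natCast_dvd_natCast.mpr
    (orderOf_natCast_dvd_of_commute_pow hcon hvabs))

end Metacyclic

theorem dvd_of_mem_center_general {G : Type*} [Group G] [Fintype G]
    (m r : ℕ) (hr : 0 < r)
    (a b : G) (hcon : b⁻¹ * a * b = a ^ r)
    (horda : orderOf a = m)
    (k : ℕ) (hk : k = m / Nat.gcd (r - 1) m)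
    (s' : ℕ) (hs' : s' = orderOf (r : ZMod m))
    (u v : ℤ) (huv : a ^ u * b ^ v ∈ Subgroup.center G) :
    (k : ℤ) ∣ u ∧ (s' : ℤ) ∣ v := by
  subst hk hs' horda
  refine ⟨?_, orderOf_natCast_dvd_of_commute_zpow hcon
    (Commute.of_mul_mem_center_right huv (Commute.zpow_right (Commute.refl a) u))⟩
  rw [Nat.gcd_comm]
  exact div_gcd_dvd_of_commute_zpow hcon hr
    (Commute.of_mul_mem_center_left huv (Commute.zpow_right (Commute.refl b) v))

/-- If `u`, `v` are integers such that `a^u · b^v` lies in the center of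
the metacyclic group `G = ⟨a, b | a^m = 1, b^s = a^t, b⁻¹ab = a^r⟩`, then `k ∣ u` and
`s' ∣ v`, where `k = m / gcd (r−1) m` and `s'` is the multiplicative order of `r` mod `m`. -/
theorem dvd_of_mem_center {G : Type*} [Group G] [Fintype G]
    (m s t r : ℕ) (hm : 0 < m) (hs : 0 < s) (ht : 0 < t) (hr : 0 < r)
    (hrsm : r ^ s ≡ 1 [MOD m]) (hmt : m ∣ t * (r - 1))
    (a b : G) (hgen : Subgroup.closure ({a, b} : Set G) = ⊤)
    (ham : a ^ m = 1) (hba : b ^ s = a ^ t) (hcon : b⁻¹ * a * b = a ^ r)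
    (horda : orderOf a = m)
    (hordb : ∀ j : ℕ, b ^ j ∈ Subgroup.zpowers a ↔ s ∣ j)
    (k : ℕ) (hk : k = m / Nat.gcd (r - 1) m)
    (s' : ℕ) (hs' : s' = orderOf (r : ZMod m))
    (u v : ℤ) (huv : a ^ u * b ^ v ∈ Subgroup.center G) :
    (k : ℤ) ∣ u ∧ (s' : ℤ) ∣ v :=
  dvd_of_mem_center_general m r hr a b hcon horda k hk s' hs' u v huv
end

section
/- The derived subgroup of G is G' = ⟨a^{r−1}⟩, the cyclic subgroup generated by a^{r−1}. -/
/-!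
Since `b⁻¹ a b = a ^ r`, the commutator `⁅a⁻¹, b⁻¹⁆ = a⁻¹ (b⁻¹ a b)` is `a ^ (r - 1)`. The derived
subgroup of a group generated by two elements is the normal closure of their commutator, because
modulo that normal closure the generators, hence all elements, commute. Finally `⟨a ^ (r - 1)⟩` is
already normal: `a` centralises it and conjugation by `b⁻¹` maps it into itself, which in a finite
group means `b` normalises it.
-/

open scoped commutatorElement

section

open Subgroup

variable {G : Type*} [Group G]

theorem isMulCommutative_of_closure_pair_eq_top {x y : G} (hgen : closure {x, y} = ⊤)
    (hxy : Commute x y) : IsMulCommutative G := by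
  have hcomm : ∀ u ∈ ({x, y} : Set G), ∀ v ∈ ({x, y} : Set G), u * v = v * u := by
    rintro u (rfl | rfl) v (rfl | rfl)
    exacts [rfl, hxy.eq, hxy.eq.symm, rfl]
  have hle := hgen ▸ closure_le_centralizer_centralizer ({x, y} : Set G)
  exact ⟨⟨fun g h ↦ Set.centralizer_centralizer_comm_of_comm hcomm _ (hle (mem_top g)) _
    (hle (mem_top h))⟩⟩

theorem commutator_eq_normalClosure_of_closure_pair_eq_top {x y : G}
    (hgen : closure {x, y} = ⊤) : _root_.commutator G = normalClosure {⁅x, y⁆} := by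
  refine le_antisymm ?_ (normalClosure_le_normal ?_)
  · rw [← Normal.quotient_commutative_iff_commutator_le]
    set N := normalClosure ({⁅x, y⁆} : Set G)
    refine isMulCommutative_of_closure_pair_eq_top (x := (x : G ⧸ N)) (y := (y : G ⧸ N)) ?_ ?_
    · rw [← Set.image_pair, ← QuotientGroup.coe_mk', ← MonoidHom.map_closure, hgen]
      exact map_top_of_surjective _ (QuotientGroup.mk'_surjective N)
    · have h : ((⁅x, y⁆ : G) : G ⧸ N) = 1 :=
        (QuotientGroup.eq_one_iff _).mpr (subset_normalClosure rfl)
      rwa [← QuotientGroup.coe_mk', map_commutatorElement,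
        commutatorElement_eq_one_iff_mul_comm] at h
  · rw [Set.singleton_subset_iff, commutator_def]
    exact commutator_mem_commutator (mem_top x) (mem_top y)

theorem mem_normalizer_zpowers_of_conj_mem [Finite G] {g y : G} (h : g * y * g⁻¹ ∈ zpowers y) :
    g ∈ normalizer (zpowers y : Set G) := by
  refine mem_normalizer_fintype ?_
  rintro _ ⟨k, rfl⟩
  rw [← conj_zpow]
  exact zpow_mem h k

theorem zpowers_pow_normal_of_conj_eq_pow [Finite G] {a b : G} {r : ℕ}
    (hgen : closure {a, b} = ⊤) (hcon : b⁻¹ * a * b = a ^ r) (n : ℕ) :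
    (zpowers (a ^ n)).Normal := by
  rw [← normalizer_eq_top_iff, eq_top_iff, ← hgen, closure_le]
  rintro g (rfl | rfl)
  · apply mem_normalizer_zpowers_of_conj_mem
    rw [(Commute.self_pow g n).eq, mul_inv_cancel_right]
    exact mem_zpowers _
  · rw [SetLike.mem_coe, ← inv_mem_iff]
    apply mem_normalizer_zpowers_of_conj_mem
    rw [← conj_pow, inv_inv, hcon, ← pow_mul, pow_mul']
    exact pow_mem (mem_zpowers _) r

end

theorem commutatorElement_inv_inv_eq_pow_sub_one {G : Type*} [Group G] {a b : G} {r : ℕ} (hr : 0 < r)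
    (hcon : b⁻¹ * a * b = a ^ r) : ⁅a⁻¹, b⁻¹⁆ = a ^ (r - 1) := by
  rw [commutatorElement_def, inv_inv, inv_inv, mul_assoc, mul_assoc, ← mul_assoc b⁻¹, hcon,
    ← mul_pow_sub_one hr.ne', inv_mul_cancel_left]

theorem commutator_eq_zpowers_general {G : Type*} [Group G] [Fintype G]
    (r : ℕ) (hr : 0 < r)
    (a b : G) (hgen : Subgroup.closure ({a, b} : Set G) = ⊤)
    (hcon : b⁻¹ * a * b = a ^ r) :
    commutator G = Subgroup.zpowers (a ^ (r - 1)) := by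
  have hgen_inv : Subgroup.closure {a⁻¹, b⁻¹} = ⊤ := by
    rwa [← Set.inv_singleton, ← Set.inv_insert, Subgroup.closure_inv]
  have := zpowers_pow_normal_of_conj_eq_pow hgen hcon (r - 1)
  rw [commutator_eq_normalClosure_of_closure_pair_eq_top hgen_inv,
    commutatorElement_inv_inv_eq_pow_sub_one hr hcon]
  exact le_antisymm
    (Subgroup.normalClosure_le_normal (Set.singleton_subset_iff.mpr (Subgroup.mem_zpowers _)))
    (Subgroup.zpowers_le.mpr (Subgroup.subset_normalClosure rfl))

/-- The derived subgroup of the metacyclic group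
`G = ⟨a, b | a^m = 1, b^s = a^t, b⁻¹ab = a^r⟩` is the cyclic subgroup generated by
`a^{r−1}`. -/
theorem commutator_eq_zpowers {G : Type*} [Group G] [Fintype G]
    (m s t r : ℕ) (hm : 0 < m) (hs : 0 < s) (ht : 0 < t) (hr : 0 < r)
    (hrsm : r ^ s ≡ 1 [MOD m]) (hmt : m ∣ t * (r - 1))
    (a b : G) (hgen : Subgroup.closure ({a, b} : Set G) = ⊤)
    (ham : a ^ m = 1) (hba : b ^ s = a ^ t) (hcon : b⁻¹ * a * b = a ^ r)
    (horda : orderOf a = m)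
    (hordb : ∀ j : ℕ, b ^ j ∈ Subgroup.zpowers a ↔ s ∣ j) :
    commutator G = Subgroup.zpowers (a ^ (r - 1)) :=
  commutator_eq_zpowers_general r hr a b hgen hcon
end

section
/- G' ∩ Z(G) = ⟨a^{m/gcd(r−1, k)}⟩, and in particular the cardinality of G' ∩ Z(G) equals gcd(r−1, k), where k = m/gcd(r−1, m). -/
/-!
Put `c = a ^ (r - 1)`, so that `b⁻¹ a b = a c` with `c` a power of `a`. Conjugation by `b⁻¹` sends
`c` to `c · c^(r-1) ∈ ⟨c⟩`; as `⟨c⟩` is finite, `⟨c⟩` is normal. Since `c = ⁅b⁻¹, a⁆` and `G/⟨c⟩` is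
generated by two commuting elements, `G' = ⟨c⟩`. Moreover `b⁻¹ a^j b = a^j c^j`, so `a^j` is central
iff `ord c ∣ j`, i.e. `Z(G) ∩ ⟨a⟩ = ⟨a^k⟩` with `k = ord c = m / gcd(r-1, m)`. In the cyclic group
`⟨a⟩` of order `m`, `⟨a^i⟩ ∩ ⟨a^j⟩ = ⟨a^lcm(gcd(i,m), gcd(j,m))⟩`, and here
`lcm(gcd(r-1, m), k) = m / gcd(r-1, k)`, a divisor of `m` of index `gcd(r-1, k)`.
-/

open scoped commutatorElement

theorem Nat.lcm_gcd_div_gcd (n m : ℕ) :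
    (n.gcd m).lcm (m / n.gcd m) = m / n.gcd (m / n.gcd m) := by
  have hk : m / n.gcd m ∣ m := Nat.div_dvd_of_dvd (Nat.gcd_dvd_right n m)
  rw [Nat.lcm, Nat.mul_div_cancel' (Nat.gcd_dvd_right n m), Nat.gcd_assoc, Nat.gcd_eq_right hk]

namespace Subgroup

variable {G : Type*} [Group G]

theorem zpow_mem_zpowers_pow_iff {x : G} {k : ℕ} {j : ℤ} :
    x ^ j ∈ zpowers (x ^ k) ↔ ((k.gcd (orderOf x) : ℕ) : ℤ) ∣ j := by
  rw [← zpow_natCast x k, ← Int.gcd_natCast_natCast, Int.coe_gcd, gcd_dvd_iff_exists]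
  simp_rw [mem_zpowers_iff, ← zpow_mul, zpow_eq_zpow_iff_modEq, Int.modEq_iff_dvd, dvd_def,
    sub_eq_iff_eq_add']

theorem zpowers_pow_inf_zpowers_pow (x : G) (i j : ℕ) :
    zpowers (x ^ i) ⊓ zpowers (x ^ j) =
      zpowers (x ^ (i.gcd (orderOf x)).lcm (j.gcd (orderOf x))) := by
  apply le_antisymm
  · intro y hy
    obtain ⟨hi, hj⟩ := mem_inf.mp hy
    obtain ⟨l, rfl⟩ : ∃ l : ℤ, x ^ l = y := by
      obtain ⟨z, rfl⟩ := mem_zpowers_iff.mp hi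
      exact ⟨i * z, by rw [zpow_mul, zpow_natCast]⟩
    rw [zpow_mem_zpowers_pow_iff] at hi hj ⊢
    have hlcm := Int.coe_lcm_dvd hi hj
    rw [Int.lcm_natCast_natCast] at hlcm
    exact (Int.natCast_dvd_natCast.mpr (Nat.gcd_dvd_left _ _)).trans hlcm
  · rw [le_inf_iff, zpowers_le, zpowers_le, ← zpow_natCast x (Nat.lcm _ _),
      zpow_mem_zpowers_pow_iff, zpow_mem_zpowers_pow_iff, Int.natCast_dvd_natCast,
      Int.natCast_dvd_natCast]
    exact ⟨Nat.dvd_lcm_left _ _, Nat.dvd_lcm_right _ _⟩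

-- Finiteness is essential: in `⟨a, b | b⁻¹ a b = a²⟩`, `b⁻¹` maps `a` into `⟨a⟩` but `b` does not.
theorem mem_normalizer_zpowers_of_conj_mem {x g : G} (hx : IsOfFinOrder x)
    (h : g * x * g⁻¹ ∈ zpowers x) : g ∈ normalizer (zpowers x : Set G) := by
  have : Finite (zpowers x) := hx.finite_zpowers.to_subtype
  have hle : (zpowers x).map (MulAut.conj g).toMonoidHom ≤ zpowers x := by
    rw [map_le_iff_le_comap, zpowers_le]
    exact h
  rw [mem_normalizer_iff_map_conj_eq]
  refine eq_of_le_of_card_ge hle ?_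
  rw [card_map_of_injective (MulAut.conj g).injective]

theorem commutator_le_of_commutatorElement_mem {a b : G} (hgen : closure {a, b} = ⊤)
    {N : Subgroup G} [N.Normal] (h : ⁅a, b⁆ ∈ N) : _root_.commutator G ≤ N := by
  rw [← Normal.quotient_commutative_iff_commutator_le]
  set π := QuotientGroup.mk' N
  have hgen' : closure {π a, π b} = ⊤ := by
    rw [← Set.image_pair, ← MonoidHom.map_closure, hgen, ← MonoidHom.range_eq_map,
      MonoidHom.range_eq_top.mpr (QuotientGroup.mk'_surjective N)]
  have hab : π a * π b = π b * π a := by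
    rw [← commutatorElement_eq_one_iff_mul_comm, ← map_commutatorElement]
    exact (QuotientGroup.eq_one_iff _).mpr h
  have hcomm : ∀ x ∈ ({π a, π b} : Set (G ⧸ N)), ∀ y ∈ ({π a, π b} : Set (G ⧸ N)),
      x * y = y * x := by
    rintro _ (rfl | rfl) _ (rfl | rfl) <;> simp only [hab]
  have hcent := closure_le_centralizer_centralizer {π a, π b}
  rw [hgen'] at hcent
  exact ⟨⟨fun x y ↦ Set.centralizer_centralizer_comm_of_comm hcomm _ (hcent (mem_top x)) _
    (hcent (mem_top y))⟩⟩

section ConjEqMul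

variable {a b c : G}

theorem conj_zpow_eq_of_conj_eq_mul (hac : Commute a c) (hcon : b⁻¹ * a * b = a * c) (j : ℤ) :
    b⁻¹ * a ^ j * b = a ^ j * c ^ j := by
  have h : (b⁻¹ * a * b⁻¹⁻¹) ^ j = b⁻¹ * a ^ j * b⁻¹⁻¹ := conj_zpow
  rwa [inv_inv, hcon, hac.mul_zpow, eq_comm] at h

theorem zpow_mem_center_iff_of_conj_eq_mul (hgen : closure {a, b} = ⊤) (hac : Commute a c)
    (hcon : b⁻¹ * a * b = a * c) (j : ℤ) : a ^ j ∈ center G ↔ (orderOf c : ℤ) ∣ j := by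
  have hb : a ^ j * b = b * a ^ j ↔ c ^ j = 1 := by
    rw [← mul_eq_left (a := a ^ j), ← conj_zpow_eq_of_conj_eq_mul hac hcon, mul_assoc,
      inv_mul_eq_iff_eq_mul]
  rw [center_eq_iInf hgen, orderOf_dvd_iff_zpow_eq_one, ← hb]
  simp [mem_centralizer_singleton_iff, ((Commute.refl a).zpow_left j).eq]

theorem center_inf_zpowers_of_conj_eq_mul (hgen : closure {a, b} = ⊤) (hc : c ∈ zpowers a)
    (hcon : b⁻¹ * a * b = a * c) : center G ⊓ zpowers a = zpowers (a ^ orderOf c) := by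
  obtain ⟨i, rfl⟩ := mem_zpowers_iff.mp hc
  have hac : Commute a (a ^ i) := (Commute.refl a).zpow_right i
  have hcenter := zpow_mem_center_iff_of_conj_eq_mul hgen hac hcon
  apply le_antisymm
  · intro x hx
    obtain ⟨hxZ, hxa⟩ := mem_inf.mp hx
    obtain ⟨j, rfl⟩ := mem_zpowers_iff.mp hxa
    rw [zpow_mem_zpowers_pow_iff, Nat.gcd_eq_left (orderOf_dvd_of_mem_zpowers hc)]
    exact (hcenter j).mp hxZ
  · rw [le_inf_iff, zpowers_le, zpowers_le]
    refine ⟨?_, pow_mem (mem_zpowers a) _⟩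
    rw [← zpow_natCast, hcenter]

theorem commutator_eq_zpowers_of_conj_eq_mul (hgen : closure {a, b} = ⊤) (ha : IsOfFinOrder a)
    (hc : c ∈ zpowers a) (hcon : b⁻¹ * a * b = a * c) : _root_.commutator G = zpowers c := by
  obtain ⟨i, rfl⟩ := mem_zpowers_iff.mp hc
  have hac : Commute a (a ^ i) := (Commute.refl a).zpow_right i
  have hfin : IsOfFinOrder (a ^ i) := ha.zpow
  have hcomm : ⁅b⁻¹, a⁆ = a ^ i := by
    rw [commutatorElement_def, inv_inv, hcon, hac.mul_inv_cancel]
  have hnormal : (zpowers (a ^ i)).Normal := by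
    rw [← normalizer_eq_top_iff, eq_top_iff, ← hgen, closure_le, Set.pair_subset_iff]
    constructor
    · refine mem_normalizer_zpowers_of_conj_mem hfin ?_
      rw [hac.mul_inv_cancel]
      exact mem_zpowers _
    · rw [← inv_inv b]
      refine inv_mem (mem_normalizer_zpowers_of_conj_mem hfin ?_)
      rw [inv_inv, conj_zpow_eq_of_conj_eq_mul hac hcon]
      exact mul_mem (mem_zpowers _) (zpow_mem_zpowers _ _)
  apply le_antisymm
  · refine commutator_le_of_commutatorElement_mem hgen ?_
    have hab : ⁅a, b⁆ = b * ⁅b⁻¹, a⁆ * b⁻¹ := by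
      simp only [commutatorElement_def]
      group
    rw [hab, hcomm]
    exact hnormal.conj_mem _ (mem_zpowers _) b
  · rw [zpowers_le, ← hcomm, _root_.commutator_def]
    exact commutator_mem_commutator (mem_top _) (mem_top _)

end ConjEqMul
end Subgroup

theorem commutator_inf_center_general {G : Type*} [Group G]
    (m r : ℕ) (hm : 0 < m) (hr : 0 < r)
    (a b : G) (hgen : Subgroup.closure ({a, b} : Set G) = ⊤)
    (hcon : b⁻¹ * a * b = a ^ r)
    (horda : orderOf a = m)
    (k : ℕ) (hk : k = m / Nat.gcd (r - 1) m) :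
    commutator G ⊓ Subgroup.center G = Subgroup.zpowers (a ^ (m / Nat.gcd (r - 1) k)) ∧
      Nat.card ↥(commutator G ⊓ Subgroup.center G) = Nat.gcd (r - 1) k := by
  have hcon' : b⁻¹ * a * b = a * a ^ (r - 1) := by rw [hcon, ← pow_succ', Nat.sub_add_cancel hr]
  have hc : a ^ (r - 1) ∈ Subgroup.zpowers a := pow_mem (Subgroup.mem_zpowers a) _
  have ha : IsOfFinOrder a := orderOf_pos_iff.mp (horda ▸ hm)
  have hkm : k ∣ m := hk ▸ Nat.div_dvd_of_dvd (Nat.gcd_dvd_right _ _)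
  have hordc : orderOf (a ^ (r - 1)) = k := by rw [ha.orderOf_pow, horda, hk, Nat.gcd_comm]
  open Subgroup in
  have hinter : commutator G ⊓ center G = zpowers (a ^ (m / (r - 1).gcd k)) :=
    calc commutator G ⊓ center G = zpowers (a ^ (r - 1)) ⊓ (center G ⊓ zpowers a) := by
          rw [commutator_eq_zpowers_of_conj_eq_mul hgen ha hc hcon', inf_comm (center G),
            ← inf_assoc, inf_of_le_left (zpowers_le.mpr hc)]
      _ = zpowers (a ^ (r - 1)) ⊓ zpowers (a ^ k) := by
          rw [center_inf_zpowers_of_conj_eq_mul hgen hc hcon', hordc]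
      _ = zpowers (a ^ (m / (r - 1).gcd k)) := by
          rw [zpowers_pow_inf_zpowers_pow, horda, Nat.gcd_eq_left hkm, hk, Nat.lcm_gcd_div_gcd]
  have hgk : (r - 1).gcd k ∣ m := (Nat.gcd_dvd_right _ _).trans hkm
  refine ⟨hinter, ?_⟩
  rw [hinter, Nat.card_zpowers, ha.orderOf_pow, horda, Nat.gcd_eq_right (Nat.div_dvd_of_dvd hgk),
    Nat.div_div_self hgk hm.ne']

/-- In the metacyclic group `G = ⟨a, b | a^m = 1, b^s = a^t, b⁻¹ab = a^r⟩`
one has `G' ∩ Z(G) = ⟨a^{m / gcd (r−1) k}⟩`, and in particular `|G' ∩ Z(G)| = gcd (r−1) k`,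
where `k = m / gcd (r−1) m`. -/
theorem commutator_inf_center {G : Type*} [Group G] [Fintype G]
    (m s t r : ℕ) (hm : 0 < m) (hs : 0 < s) (ht : 0 < t) (hr : 0 < r)
    (hrsm : r ^ s ≡ 1 [MOD m]) (hmt : m ∣ t * (r - 1))
    (a b : G) (hgen : Subgroup.closure ({a, b} : Set G) = ⊤)
    (ham : a ^ m = 1) (hba : b ^ s = a ^ t) (hcon : b⁻¹ * a * b = a ^ r)
    (horda : orderOf a = m)
    (hordb : ∀ j : ℕ, b ^ j ∈ Subgroup.zpowers a ↔ s ∣ j)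
    (k : ℕ) (hk : k = m / Nat.gcd (r - 1) m) :
    commutator G ⊓ Subgroup.center G = Subgroup.zpowers (a ^ (m / Nat.gcd (r - 1) k)) ∧
      Nat.card ↥(commutator G ⊓ Subgroup.center G) = Nat.gcd (r - 1) k :=
  commutator_inf_center_general m r hm hr a b hgen hcon horda k hk
end

section
/- If G is a finite metacyclic group, then the cardinality of the Schur multiplier of G/Z(G), i.e., of the second group homology H₂(G/Z(G); ℤ) with trivial coefficients, is at most the cardinality of G' ∩ Z(G). (This is the key inequality showing, via Ganea's exact sequence, that Ganea's homomorphism H₁(G) ⊗ Z(G) → H₂(G) is an epimorphism for finite metacyclic groups.) -/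
/-- The kernel of the canonical presentation `FreeGroup Q → Q`. -/
def presentationKernel (Q : Type*) [Group Q] : Subgroup (FreeGroup Q) :=
  (FreeGroup.lift (id : Q → Q)).ker

instance (Q : Type*) [Group Q] : (presentationKernel Q).Normal :=
  MonoidHom.normal_ker _

/-- The Schur multiplier `H₂(Q; ℤ)` of a group `Q`, given by Hopf's integral homology
formula `H₂(Q; ℤ) ≅ (R ∩ [F, F]) / [F, R]` for the free presentation
`1 → R → F → Q → 1` with `F = FreeGroup Q`. -/
def SchurMultiplier (Q : Type*) [Group Q] : Type _ :=
  ↥(presentationKernel Q ⊓ commutator (FreeGroup Q)) ⧸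
    (⁅(⊤ : Subgroup (FreeGroup Q)), presentationKernel Q⁆.subgroupOf
      (presentationKernel Q ⊓ commutator (FreeGroup Q)))

noncomputable instance (Q : Type*) [Group Q] : Group (SchurMultiplier Q) :=
  inferInstanceAs (Group (_ ⧸ _))

/-!
Write `Q = G/Z(G)`, `F` for the free group on `Q`, `R` for the kernel of `F → Q` and
`W = F/[F, R]`, a central extension of `Q` in which the Schur multiplier `(R ∩ F')/[F, R]` sits
inside `W'`. If `K = ⟨k⟩` and `G/K = ⟨gK⟩`, then `⁅k, g⁆ = k ^ e`, and the lifts `u`, `t` of the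
images of `k`, `g` in `Q` satisfy `⁅u, t⁆ = z u ^ e` with `z` central. Hence `⟨⁅u, t⁆⟩` is
normalised by `u` and `t`, and `W'` is the cyclic group `⟨⁅u, t⁆⟩`. A section of `G → Q` induces
`W → G`, mapping `R/[F, R]` into `Z(G)`, `W'` into `G'` and `⁅u, t⁆` to `⁅k, g⁆`; as the order of
`⁅u, t⁆` divides that of `⁅k, g⁆`, this map is injective on `W'`, so it embeds the Schur
multiplier into `G' ∩ Z(G)`.
-/

open scoped commutatorElement

open Subgroup

section Commutators

variable {H M : Type*} [Group H] [Group M]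

theorem map_mem_commutator (f : H →* M) {x : H} (hx : x ∈ commutator H) :
    f x ∈ commutator M :=
  commutator_mono le_top le_top (map_commutator_eq H f ▸ mem_map_of_mem f hx)

theorem map_center_le_center {f : H →* M} (hf : Function.Surjective f) :
    (center H).map f ≤ center M := by
  rintro _ ⟨z, hz, rfl⟩
  refine mem_center_iff.mpr fun y => ?_
  obtain ⟨x, rfl⟩ := hf y
  rw [← map_mul, ← map_mul, mem_center_iff.mp hz x]

theorem commutatorElement_eq_of_mk_center_eq {a a' b b' : H}
    (ha : (a : H ⧸ center H) = a') (hb : (b : H ⧸ center H) = b') : ⁅a, b⁆ = ⁅a', b'⁆ := by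
  obtain ⟨z, hz, rfl⟩ : ∃ z ∈ center H, a' = a * z := ⟨a⁻¹ * a', QuotientGroup.eq.mp ha, by group⟩
  obtain ⟨w, hw, rfl⟩ : ∃ w ∈ center H, b' = b * w := ⟨b⁻¹ * b', QuotientGroup.eq.mp hb, by group⟩
  have hz' : ∀ x : H, ⁅z, x⁆ = 1 := fun x ↦ Commute.commutator_eq (mem_center_iff.mp hz x).symm
  have hw' : ∀ x : H, ⁅x, w⁆ = 1 := fun x ↦ Commute.commutator_eq (mem_center_iff.mp hw x)
  rw [commutatorElement_mul_left_eq_conj_mul, hz', commutatorElement_mul_right_eq_mul_conj, hw']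
  group

theorem commutatorElement_pow_left {a b : H} (h : Commute a ⁅a, b⁆) (n : ℕ) :
    ⁅a ^ n, b⁆ = ⁅a, b⁆ ^ n := by
  induction n with
  | zero => simp
  | succ n ih =>
    rw [pow_succ', commutatorElement_mul_left_eq_conj_mul, ih, (h.pow_right n).eq,
      mul_inv_cancel_right, pow_succ]

theorem commutatorElement_pow_eq_one_of_pow_mem_center {a b : H} (h : Commute a ⁅a, b⁆) {n : ℕ}
    (hn : a ^ n ∈ center H) : ⁅a, b⁆ ^ n = 1 := by
  rw [← commutatorElement_pow_left h, commutatorElement_eq_one_iff_commute]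
  exact (mem_center_iff.mp hn b).symm

theorem pow_mem_center_of_commutatorElement_pow_eq_one {a b : H}
    (hdec : ∀ x : H, ∃ z ∈ center H, ∃ i j : ℤ, x = z * b ^ i * a ^ j)
    (h : Commute a ⁅a, b⁆) {n : ℕ} (hn : ⁅a, b⁆ ^ n = 1) : a ^ n ∈ center H := by
  have hb : Commute (a ^ n) b := by
    rw [← commutatorElement_eq_one_iff_commute, commutatorElement_pow_left h, hn]
  refine mem_center_iff.mpr fun x => ?_
  obtain ⟨z, hz, i, j, rfl⟩ := hdec x
  have hz' : Commute (a ^ n) z := mem_center_iff.mp hz _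
  exact ((hz'.mul_right (hb.zpow_right i)).mul_right
    (((Commute.refl a).pow_left n).zpow_right j)).eq.symm

theorem commute_mul_zpow_mul_zpow {z₁ z₂ a b : H} (hz₁ : z₁ ∈ center H) (hz₂ : z₂ ∈ center H)
    (hab : Commute a b) (i₁ j₁ i₂ j₂ : ℤ) :
    Commute (z₁ * a ^ i₁ * b ^ j₁) (z₂ * a ^ i₂ * b ^ j₂) := by
  have hz₁' : ∀ x, Commute z₁ x := fun x ↦ (mem_center_iff.mp hz₁ x).symm
  have hz₂' : ∀ x, Commute x z₂ := fun x ↦ mem_center_iff.mp hz₂ x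
  refine ((hz₁' _).mul_left ?_).mul_left ?_
  · exact ((hz₂' _).mul_right ((Commute.refl a).zpow_zpow _ _)).mul_right (hab.zpow_zpow _ _)
  · exact ((hz₂' _).mul_right (hab.symm.zpow_zpow _ _)).mul_right ((Commute.refl b).zpow_zpow _ _)

end Commutators

section MetacyclicCommutator

variable {W : Type*} [Group W] {u t : W} {e : ℤ}

theorem commute_commutatorElement_of_eq_mul_zpow (he : ∃ z ∈ center W, ⁅u, t⁆ = z * u ^ e) :
    Commute u ⁅u, t⁆ := by
  obtain ⟨z, hz, hc⟩ := he
  rw [hc]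
  exact (show Commute u z from mem_center_iff.mp hz u).mul_right ((Commute.refl u).zpow_right e)

theorem conj_commutatorElement_eq_zpow (he : ∃ z ∈ center W, ⁅u, t⁆ = z * u ^ e) :
    t * ⁅u, t⁆ * t⁻¹ = ⁅u, t⁆ ^ (1 - e) := by
  have hcu := (commute_commutatorElement_of_eq_mul_zpow he).symm
  obtain ⟨z, hz, hc⟩ := he
  have htu : t * u * t⁻¹ = ⁅u, t⁆⁻¹ * u := by
    rw [commutatorElement_inv, commutatorElement_def]; group
  have htz : t * z * t⁻¹ = z := by rw [mem_center_iff.mp hz t, mul_inv_cancel_right]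
  calc t * ⁅u, t⁆ * t⁻¹ = (t * z * t⁻¹) * (t * u * t⁻¹) ^ e := by
        rw [hc, ← MulAut.conj_apply, ← MulAut.conj_apply, ← MulAut.conj_apply, map_mul, map_zpow]
    _ = ⁅u, t⁆ ^ (-e) * (z * u ^ e) := by
        rw [htz, htu, hcu.inv_left.mul_zpow, inv_zpow', ← mul_assoc, ← mul_assoc,
          mem_center_iff.mp hz]
    _ = ⁅u, t⁆ ^ (1 - e) := by rw [← hc, ← zpow_add_one, neg_add_eq_sub]

theorem normal_zpowers_commutatorElement
    (hdec : ∀ w : W, ∃ z ∈ center W, ∃ i j : ℤ, w = z * t ^ i * u ^ j)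
    (he : ∃ z ∈ center W, ⁅u, t⁆ = z * u ^ e) (hfin : IsOfFinOrder ⁅u, t⁆) :
    (zpowers ⁅u, t⁆).Normal := by
  have : Finite (zpowers ⁅u, t⁆ : Set W) := (finite_zpowers.mpr hfin).to_subtype
  have hu : u ∈ normalizer (zpowers ⁅u, t⁆ : Set W) := by
    refine mem_normalizer_fintype ?_
    rintro _ ⟨j, rfl⟩
    rw [((commute_commutatorElement_of_eq_mul_zpow he).zpow_right j).eq, mul_inv_cancel_right]
    exact zpow_mem_zpowers _ _
  have ht : t ∈ normalizer (zpowers ⁅u, t⁆ : Set W) := by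
    refine mem_normalizer_fintype ?_
    rintro _ ⟨j, rfl⟩
    rw [← MulAut.conj_apply, map_zpow, MulAut.conj_apply, conj_commutatorElement_eq_zpow he,
      ← zpow_mul]
    exact zpow_mem_zpowers _ _
  rw [← normalizer_eq_top_iff, eq_top_iff]
  intro w _
  obtain ⟨z, hz, i, j, rfl⟩ := hdec w
  exact mul_mem (mul_mem (center_le_normalizer _ hz) (zpow_mem ht i)) (zpow_mem hu j)

theorem commutator_le_zpowers_commutatorElement
    (hdec : ∀ w : W, ∃ z ∈ center W, ∃ i j : ℤ, w = z * t ^ i * u ^ j)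
    (he : ∃ z ∈ center W, ⁅u, t⁆ = z * u ^ e) (hfin : IsOfFinOrder ⁅u, t⁆) :
    commutator W ≤ zpowers ⁅u, t⁆ := by
  have := normal_zpowers_commutatorElement hdec he hfin
  let π := QuotientGroup.mk' (zpowers ⁅u, t⁆)
  have hπz : ∀ z ∈ center W, π z ∈ center _ := fun z hz ↦
    map_center_le_center (QuotientGroup.mk'_surjective _) (mem_map_of_mem π hz)
  have hπtu : Commute (π t) (π u) := by
    rw [← commutatorElement_eq_one_iff_commute, ← map_commutatorElement,
      QuotientGroup.mk'_apply, QuotientGroup.eq_one_iff, ← commutatorElement_inv u t]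
    exact inv_mem (mem_zpowers ⁅u, t⁆)
  rw [_root_.commutator_def, commutator_le]
  intro w₁ _ w₂ _
  obtain ⟨z₁, hz₁, i₁, j₁, rfl⟩ := hdec w₁
  obtain ⟨z₂, hz₂, i₂, j₂, rfl⟩ := hdec w₂
  rw [← QuotientGroup.eq_one_iff, ← QuotientGroup.mk'_apply, map_commutatorElement,
    commutatorElement_eq_one_iff_commute]
  simp only [map_mul, map_zpow]
  exact commute_mul_zpow_mul_zpow (hπz z₁ hz₁) (hπz z₂ hz₂) hπtu i₁ j₁ i₂ j₂

end MetacyclicCommutator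

theorem exists_mem_center_eq_mul_zpow_mul_zpow {W Q : Type*} [Group W] [Group Q] {p : W →* Q}
    (hp : p.ker ≤ center W) {t u : W} (hdec : ∀ q : Q, ∃ i j : ℤ, q = p t ^ i * p u ^ j)
    (w : W) : ∃ z ∈ center W, ∃ i j : ℤ, w = z * t ^ i * u ^ j := by
  obtain ⟨i, j, hw⟩ := hdec (p w)
  refine ⟨w * (t ^ i * u ^ j)⁻¹, hp ?_, i, j, by group⟩
  rw [MonoidHom.mem_ker, map_mul, map_inv, map_mul, map_zpow, map_zpow, hw, mul_inv_cancel]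

abbrev FreeCentralExtension (Q : Type*) [Group Q] : Type _ :=
  FreeGroup Q ⧸ ⁅(⊤ : Subgroup (FreeGroup Q)), presentationKernel Q⁆

namespace FreeCentralExtension

variable {Q : Type*} [Group Q]

def proj : FreeCentralExtension Q →* Q :=
  QuotientGroup.lift _ (FreeGroup.lift id) (commutator_le_right _ _)

theorem ker_proj_le_center : (proj : FreeCentralExtension Q →* Q).ker ≤ center _ := by
  intro w hw
  induction w using QuotientGroup.induction_on with | H r =>
  refine mem_center_iff.mpr fun v ↦ ?_
  induction v using QuotientGroup.induction_on with | H f =>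
  have h : ((⁅f, r⁆ : FreeGroup Q) : FreeCentralExtension Q) = 1 :=
    (QuotientGroup.eq_one_iff _).mpr (commutator_mem_commutator (mem_top f) hw)
  rw [← QuotientGroup.mk'_apply, map_commutatorElement] at h
  exact commutatorElement_eq_one_iff_commute.mp h

def ofSchurMultiplier : SchurMultiplier Q →* FreeCentralExtension Q :=
  QuotientGroup.lift _ ((QuotientGroup.mk' _).comp (Subgroup.subtype _))
    fun _ hx ↦ (QuotientGroup.eq_one_iff _).mpr hx

theorem ofSchurMultiplier_injective :
    Function.Injective (ofSchurMultiplier : SchurMultiplier Q →* FreeCentralExtension Q) := by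
  refine (QuotientGroup.injective_lift_iff _ _ _).mpr ?_
  ext x
  simp [Subgroup.mem_subgroupOf]

theorem ofSchurMultiplier_mem (x : SchurMultiplier Q) :
    ofSchurMultiplier x ∈ commutator _ ⊓ (proj : FreeCentralExtension Q →* Q).ker := by
  induction x using QuotientGroup.induction_on with | H r =>
  exact ⟨map_mem_commutator (QuotientGroup.mk' _) r.2.2, r.2.1⟩

section LiftOut

variable (G : Type*) [Group G]

theorem mk_freeGroupLift_out (f : FreeGroup (G ⧸ center G)) :
    (FreeGroup.lift (Quotient.out : G ⧸ center G → G) f : G ⧸ center G) = FreeGroup.lift id f :=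
  DFunLike.congr_fun (FreeGroup.ext_hom ((QuotientGroup.mk' _).comp (FreeGroup.lift Quotient.out))
    (FreeGroup.lift id) fun q ↦ by simp) f

noncomputable def liftOut : FreeCentralExtension (G ⧸ center G) →* G :=
  QuotientGroup.lift _ (FreeGroup.lift Quotient.out) <| commutator_le.mpr fun f _ r hr ↦ by
    have hr' := (QuotientGroup.eq_one_iff _).mp ((mk_freeGroupLift_out G r).trans hr)
    rw [MonoidHom.mem_ker, map_commutatorElement]
    exact Commute.commutator_eq (mem_center_iff.mp hr' _)

theorem mk_liftOut (w : FreeCentralExtension (G ⧸ center G)) :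
    (liftOut G w : G ⧸ center G) = proj w := by
  induction w using QuotientGroup.induction_on with | H f =>
  exact mk_freeGroupLift_out G f

theorem liftOut_mem_center {w : FreeCentralExtension (G ⧸ center G)} (hw : proj w = 1) :
    liftOut G w ∈ center G :=
  (QuotientGroup.eq_one_iff _).mp ((mk_liftOut G w).trans hw)

end LiftOut

end FreeCentralExtension

open FreeCentralExtension in
theorem card_schurMultiplier_le_of_commutator_le_zpowers {G : Type*} [Group G] [Finite G]
    {c : FreeCentralExtension (G ⧸ center G)} (hc : commutator _ ≤ zpowers c)
    (hcn : c ^ orderOf (liftOut G c) = 1) :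
    Nat.card (SchurMultiplier (G ⧸ center G)) ≤ Nat.card ↥(commutator G ⊓ center G) := by
  have hinj : ∀ w ∈ zpowers c, liftOut G w = 1 → w = 1 := by
    rintro _ ⟨j, rfl⟩ h
    rw [map_zpow, ← orderOf_dvd_iff_zpow_eq_one] at h
    obtain ⟨m, rfl⟩ := h
    simp only [zpow_mul, zpow_natCast, hcn, one_zpow]
  let θ := ((liftOut G).comp ofSchurMultiplier).codRestrict (commutator G ⊓ center G) fun x ↦
    ⟨map_mem_commutator (liftOut G) (ofSchurMultiplier_mem x).1,
      liftOut_mem_center G (ofSchurMultiplier_mem x).2⟩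
  refine Nat.card_le_card_of_injective θ ((injective_iff_map_eq_one θ).mpr fun x hx ↦ ?_)
  have hx' : ofSchurMultiplier x = 1 :=
    hinj _ (hc (ofSchurMultiplier_mem x).1) (congrArg Subtype.val hx)
  exact ofSchurMultiplier_injective (hx'.trans (map_one _).symm)

open FreeCentralExtension in
theorem card_schurMultiplier_le_of_commutatorElement_eq_zpow {G : Type*} [Group G] [Finite G]
    {k g : G} {e : ℤ} (hdec : ∀ x : G, ∃ i j : ℤ, x = g ^ i * k ^ j) (he : ⁅k, g⁆ = k ^ e) :
    Nat.card (SchurMultiplier (G ⧸ center G)) ≤ Nat.card ↥(commutator G ⊓ center G) := by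
  let u : FreeCentralExtension (G ⧸ center G) := (FreeGroup.of (k : G ⧸ center G) : FreeGroup _)
  let t : FreeCentralExtension (G ⧸ center G) := (FreeGroup.of (g : G ⧸ center G) : FreeGroup _)
  have hpu : proj u = k := FreeGroup.lift_apply_of
  have hpt : proj t = g := FreeGroup.lift_apply_of
  have hWdec := exists_mem_center_eq_mul_zpow_mul_zpow ker_proj_le_center (t := t) (u := u)
    fun q ↦ by
      obtain ⟨x, rfl⟩ := QuotientGroup.mk_surjective q
      obtain ⟨i, j, rfl⟩ := hdec x
      exact ⟨i, j, by rw [hpt, hpu]; rfl⟩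
  have hWe : ∃ z ∈ center _, ⁅u, t⁆ = z * u ^ e := by
    refine ⟨⁅u, t⁆ * (u ^ e)⁻¹, ker_proj_le_center ?_, by group⟩
    rw [MonoidHom.mem_ker, map_mul, map_inv, map_zpow, map_commutatorElement, hpu, hpt,
      ← QuotientGroup.mk_zpow, ← he, mul_inv_eq_one]
    exact (map_commutatorElement (QuotientGroup.mk' _) k g).symm
  have hlift : liftOut G ⁅u, t⁆ = ⁅k, g⁆ := by
    rw [map_commutatorElement]
    exact commutatorElement_eq_of_mk_center_eq ((mk_liftOut G u).trans hpu)
      ((mk_liftOut G t).trans hpt)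
  have hk : k ^ orderOf ⁅k, g⁆ ∈ center G :=
    pow_mem_center_of_commutatorElement_pow_eq_one
      (fun x ↦ ⟨1, one_mem _, by simpa only [one_mul] using hdec x⟩)
      (he ▸ (Commute.refl k).zpow_right e) (pow_orderOf_eq_one _)
  have hcn : ⁅u, t⁆ ^ orderOf ⁅k, g⁆ = 1 := by
    refine commutatorElement_pow_eq_one_of_pow_mem_center
      (commute_commutatorElement_of_eq_mul_zpow hWe) (ker_proj_le_center ?_)
    rw [MonoidHom.mem_ker, map_pow, hpu, ← QuotientGroup.mk_pow, QuotientGroup.eq_one_iff]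
    exact hk
  refine card_schurMultiplier_le_of_commutator_le_zpowers
    (commutator_le_zpowers_commutatorElement hWdec hWe ?_) (hlift ▸ hcn)
  exact isOfFinOrder_iff_pow_eq_one.mpr ⟨_, orderOf_pos _, hcn⟩

theorem exists_eq_zpow_mul_zpow_of_zpowers_eq {G : Type*} [Group G] {K : Subgroup G} [K.Normal]
    {k g : G} (hk : zpowers k = K) (hg : zpowers (g : G ⧸ K) = ⊤) (x : G) :
    ∃ i j : ℤ, x = g ^ i * k ^ j := by
  obtain ⟨i, hi⟩ := mem_zpowers_iff.mp (hg ▸ mem_top (x : G ⧸ K))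
  have hx : (g ^ i)⁻¹ * x ∈ zpowers k :=
    hk ▸ QuotientGroup.eq.mp (by rw [QuotientGroup.mk_zpow, hi])
  obtain ⟨j, hj⟩ := mem_zpowers_iff.mp hx
  exact ⟨i, j, by rw [hj, mul_inv_cancel_left]⟩

/-- If `G` is a finite metacyclic group, then the cardinality of the
Schur multiplier `H₂(G/Z(G); ℤ)` of `G/Z(G)` is at most the cardinality of `G' ∩ Z(G)`.
(This is the key inequality showing that Ganea's homomorphism
`H₁(G) ⊗ Z(G) → H₂(G)` is an epimorphism for finite metacyclic groups.) -/
theorem card_schurMultiplier_le {G : Type*} [Group G] [Fintype G]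
    (K : Subgroup G) (hKn : K.Normal) (hKc : IsCyclic K) (hQc : IsCyclic (G ⧸ K)) :
    Nat.card (SchurMultiplier (G ⧸ Subgroup.center G)) ≤
      Nat.card ↥(commutator G ⊓ Subgroup.center G) := by
  obtain ⟨k, hk⟩ := (K.isCyclic_iff_exists_zpowers_eq_top).mp hKc
  obtain ⟨q, hq⟩ := isCyclic_iff_exists_zpowers_eq_top.mp hQc
  obtain ⟨g, rfl⟩ := QuotientGroup.mk_surjective q
  have hkg : ⁅k, g⁆ ∈ K :=
    commutator_le_left K ⊤ (commutator_mem_commutator (hk ▸ mem_zpowers k) (mem_top g))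
  obtain ⟨e, he⟩ := mem_zpowers_iff.mp (hk ▸ hkg)
  exact card_schurMultiplier_le_of_commutatorElement_eq_zpow
    (exists_eq_zpow_mul_zpow_of_zpowers_eq hk hq) he.symm
end

section
/- If G is a finite metacyclic group whose abelianization G/G' is cyclic, then G is a semidirect product of two cyclic groups; that is, there exist subgroups K and L of G with K normal in G, K and L both cyclic, K ∩ L = 1, and KL = G. -/
open scoped Pointwise commutatorElement

/-!
Since `G/K₀` is abelian, `G' ≤ K₀` is cyclic, and since `G/G'` is cyclic, `G = G'⟨g⟩` for
some `g`. For an abelian normal subgroup `A` with `G = A⟨g⟩`, the map `a ↦ ⁅g, a⁆` is an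
endomorphism of `A` whose image is normal with abelian quotient, so it contains `G'`. Taking
`A = G'` finite, this endomorphism is onto, hence injective: no nontrivial element of `G'`
commutes with `g`, and in particular `G' ∩ ⟨g⟩ = 1`. So `K = G'`, `L = ⟨g⟩` works.
-/

open Subgroup

section

variable {G : Type*} [Group G]

lemma exists_sup_zpowers_eq_top_of_isCyclic (N : Subgroup G) [N.Normal] [IsCyclic (G ⧸ N)] :
    ∃ g : G, N ⊔ zpowers g = ⊤ := by
  obtain ⟨q, hq⟩ := isCyclic_iff_exists_zpowers_eq_top.mp ‹IsCyclic (G ⧸ N)›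
  obtain ⟨g, rfl⟩ := QuotientGroup.mk_surjective q
  refine ⟨g, ?_⟩
  rw [sup_comm, ← QuotientGroup.ker_mk' N, ← comap_map_eq, MonoidHom.map_zpowers,
    QuotientGroup.mk'_apply, hq, comap_top]

lemma commutatorElement_conj_of_commute {c g : G} (h : Commute c g) (x : G) :
    c * ⁅g, x⁆ * c⁻¹ = ⁅g, c * x * c⁻¹⁆ := by
  simpa only [MulAut.conj_apply, h.eq, mul_inv_cancel_right] using
    map_commutatorElement (MulAut.conj c) g x

lemma Subgroup.Normal.commutatorElement_mem {N : Subgroup G} (hN : N.Normal) (g : G) {x : G}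
    (hx : x ∈ N) : ⁅g, x⁆ ∈ N :=
  N.mul_mem (hN.conj_mem x hx g) (N.inv_mem hx)

end

namespace Subgroup

variable {G : Type*} [Group G] (A : Subgroup G) [A.Normal] [IsMulCommutative A] (g : G)

def commutatorHom : A →* A where
  toFun x := ⟨⁅g, (x : G)⁆, ‹A.Normal›.commutatorElement_mem g x.2⟩
  map_one' := by ext; simp
  map_mul' x y := by
    ext
    have hc : (x : G)⁻¹ * ⁅g, (y : G)⁆ = ⁅g, (y : G)⁆ * (x : G)⁻¹ :=
      setLike_mul_comm (A.inv_mem x.2) (‹A.Normal›.commutatorElement_mem g y.2)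
    calc ⁅g, (x : G) * y⁆ = g * x * g⁻¹ * (⁅g, (y : G)⁆ * (x : G)⁻¹) := by
          simp only [commutatorElement_def]; group
      _ = ⁅g, (x : G)⁆ * ⁅g, (y : G)⁆ := by rw [← hc, commutatorElement_def]; group

@[simp]
lemma commutatorHom_apply (x : A) : (commutatorHom A g x : G) = ⁅g, (x : G)⁆ := rfl

end Subgroup

section

variable {G : Type*} [Group G] {A : Subgroup G} [A.Normal] {g : G}

lemma exists_mul_zpow_eq (h : A ⊔ zpowers g = ⊤) (x : G) :
    ∃ a ∈ A, ∃ k : ℤ, a * g ^ k = x := by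
  obtain ⟨a, ha, c, hc, rfl⟩ := mem_sup_of_normal_left.mp (h ▸ mem_top x)
  obtain ⟨k, rfl⟩ := mem_zpowers_iff.mp hc
  exact ⟨a, ha, k, rfl⟩

variable [IsMulCommutative A]

lemma normal_range_commutatorHom (h : A ⊔ zpowers g = ⊤) :
    (A.subtype.comp (A.commutatorHom g)).range.Normal := by
  refine ⟨?_⟩
  rintro _ ⟨x, rfl⟩ y
  obtain ⟨a, ha, k, rfl⟩ := exists_mul_zpow_eq h y
  have hx : g ^ k * x * (g ^ k)⁻¹ ∈ A := ‹A.Normal›.conj_mem x x.2 _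
  refine ⟨⟨_, hx⟩, ?_⟩
  have hmem : g ^ k * ⁅g, (x : G)⁆ * (g ^ k)⁻¹ ∈ A :=
    ‹A.Normal›.conj_mem _ (‹A.Normal›.commutatorElement_mem g x.2) _
  have hcomm := setLike_mul_comm ha hmem
  calc ⁅g, g ^ k * x * (g ^ k)⁻¹⁆ = g ^ k * ⁅g, (x : G)⁆ * (g ^ k)⁻¹ :=
        (commutatorElement_conj_of_commute ((Commute.refl g).zpow_left k) _).symm
    _ = a * (g ^ k * ⁅g, (x : G)⁆ * (g ^ k)⁻¹) * a⁻¹ := by rw [hcomm]; group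
    _ = a * g ^ k * ⁅g, (x : G)⁆ * (a * g ^ k)⁻¹ := by group

lemma commutator_le_range_commutatorHom (h : A ⊔ zpowers g = ⊤) :
    commutator G ≤ (A.subtype.comp (A.commutatorHom g)).range := by
  set M := (A.subtype.comp (A.commutatorHom g)).range
  have := normal_range_commutatorHom h
  have hg : ∀ c ∈ A, Commute (g : G ⧸ M) c := fun c hc ↦ by
    rw [← commutatorElement_eq_one_iff_commute, ← QuotientGroup.mk'_apply,
      ← QuotientGroup.mk'_apply, ← map_commutatorElement, QuotientGroup.mk'_apply,
      QuotientGroup.eq_one_iff]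
    exact ⟨⟨c, hc⟩, rfl⟩
  refine Normal.quotient_commutative_iff_commutator_le.mp ⟨⟨fun p q ↦ ?_⟩⟩
  obtain ⟨x, rfl⟩ := QuotientGroup.mk_surjective p
  obtain ⟨y, rfl⟩ := QuotientGroup.mk_surjective q
  obtain ⟨a, ha, i, rfl⟩ := exists_mul_zpow_eq h x
  obtain ⟨b, hb, j, rfl⟩ := exists_mul_zpow_eq h y
  simp only [QuotientGroup.mk_mul, QuotientGroup.mk_zpow]
  have hab : Commute (a : G ⧸ M) b := congrArg _ (setLike_mul_comm ha hb)
  exact (hab.mul_right ((hg a ha).symm.zpow_right j)).mul_left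
    (((hg b hb).zpow_left i).mul_right ((Commute.refl _).zpow_zpow i j))

end

section

variable {G : Type*} [Group G] {g : G}

lemma commutator_inf_zpowers_eq_bot [Finite (commutator G)] [IsMulCommutative (commutator G)]
    (h : commutator G ⊔ zpowers g = ⊤) : commutator G ⊓ zpowers g = ⊥ := by
  have hsurj : Function.Surjective ((commutator G).commutatorHom g) := fun y ↦ by
    obtain ⟨x, hx⟩ := commutator_le_range_commutatorHom h y.2
    exact ⟨x, Subtype.ext hx⟩
  rw [eq_bot_iff]
  rintro _ ⟨hxA, hxg⟩
  obtain ⟨k, rfl⟩ := mem_zpowers_iff.mp hxg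
  have hfix : (commutator G).commutatorHom g ⟨_, hxA⟩ = (commutator G).commutatorHom g 1 :=
    Subtype.ext (by simp [commutatorElement_eq_one_iff_commute, (Commute.refl g).zpow_right k])
  exact congrArg Subtype.val (Finite.injective_iff_surjective.mpr hsurj hfix)

end

/-- If `G` is a finite metacyclic group whose abelianization `G/G'` is
cyclic, then `G` is a (inner) semidirect product of two cyclic groups: there are subgroups
`K` and `L` of `G` with `K` normal, `K` and `L` cyclic, `K ∩ L = 1` and `KL = G`. -/
theorem metacyclic_split_of_cyclic_abelianization {G : Type*} [Group G] [Fintype G]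
    (K₀ : Subgroup G) (hK₀n : K₀.Normal) (hK₀c : IsCyclic K₀) (hQc : IsCyclic (G ⧸ K₀))
    (hab : IsCyclic (G ⧸ commutator G)) :
    ∃ K L : Subgroup G, K.Normal ∧ IsCyclic K ∧ IsCyclic L ∧ K ⊓ L = ⊥ ∧
      (K : Set G) * (L : Set G) = Set.univ := by
  have hle : commutator G ≤ K₀ := Normal.quotient_commutative_iff_commutator_le.mp inferInstance
  have : IsCyclic (commutator G) := isCyclic_of_le hle
  obtain ⟨g, hg⟩ := exists_sup_zpowers_eq_top_of_isCyclic (commutator G)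
  refine ⟨commutator G, zpowers g, inferInstance, this, inferInstance,
    commutator_inf_zpowers_eq_bot hg, ?_⟩
  rw [← normal_mul, hg, coe_top]
end

section
/- The abelianization of G has cardinality |G/G'| = gcd(m, r−1)·s, and the image of ⟨a⟩ in G/G' has cardinality gcd(m, r−1). -/
/-!
Conjugation by `b` maps `⟨a⟩` into itself, so in the finite group `G` both `⟨a⟩` and
`⟨a ^ (r - 1)⟩` are normal, and `G ⧸ ⟨a⟩` is cyclic, generated by the image of `b`, of order
`s`; hence `|G| = s * m`. Since `a ^ (r - 1) = ⁅a⁻¹, b⁻¹⁆` and the generators commute modulo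
`⟨a ^ (r - 1)⟩`, the derived subgroup is `⟨a ^ (r - 1)⟩`, of order `m / gcd m (r - 1)`.
As `G' ≤ ⟨a⟩`, the image of `⟨a⟩` in `G ⧸ G'` still has index `s`.
-/

open Subgroup

open scoped commutatorElement

section

variable {G : Type*} [Group G]

theorem commute_of_closure_pair_eq_top {x y : G} (hgen : closure {x, y} = ⊤)
    (hxy : Commute x y) (g h : G) : Commute g h := by
  have : IsMulCommutative (closure ({x, y} : Set G)) :=
    isMulCommutative_closure <| by
      rintro _ (rfl | rfl) _ (rfl | rfl)
      exacts [rfl, hxy.eq, hxy.symm.eq, rfl]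
  have hg : g ∈ closure ({x, y} : Set G) := hgen ▸ mem_top g
  have hh : h ∈ closure ({x, y} : Set G) := hgen ▸ mem_top h
  exact congrArg Subtype.val (mul_comm' (⟨g, hg⟩ : closure ({x, y} : Set G)) ⟨h, hh⟩)

theorem closure_pair_map_eq_top {H : Type*} [Group H] {f : G →* H}
    (hf : Function.Surjective f) {x y : G} (hgen : closure {x, y} = ⊤) :
    closure {f x, f y} = ⊤ := by
  rw [← map_top_of_surjective f hf, ← hgen, MonoidHom.map_closure, Set.image_pair]

theorem normal_zpowers_of_conj_mem [Finite G] {S : Set G} (hS : closure S = ⊤) {x : G}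
    (hx : ∀ g ∈ S, g⁻¹ * x * g ∈ zpowers x) : (zpowers x).Normal := by
  rw [← normalizer_eq_top_iff, ← top_le_iff, ← hS, closure_le]
  intro g hg
  rw [← inv_inv g]
  refine inv_mem (mem_normalizer_fintype fun n hn => ?_)
  obtain ⟨k, rfl⟩ := mem_zpowers_iff.mp hn
  rw [← conj_zpow, inv_inv]
  exact zpow_mem (hx g hg) k

variable {a b : G} {r : ℕ}

theorem conj_pow_eq_pow_of_conj_eq_pow (hcon : b⁻¹ * a * b = a ^ r) (n : ℕ) :
    b⁻¹ * a ^ n * b = (a ^ n) ^ r := by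
  have := conj_pow (a := b⁻¹) (b := a) (i := n)
  rw [inv_inv] at this
  rw [← this, hcon, pow_right_comm]

theorem normal_zpowers_pow [Finite G] (hgen : closure {a, b} = ⊤)
    (hcon : b⁻¹ * a * b = a ^ r) (n : ℕ) : (zpowers (a ^ n)).Normal :=
  normal_zpowers_of_conj_mem hgen <| by
    rintro _ (rfl | rfl)
    · rw [mul_assoc, ← pow_succ, pow_succ', inv_mul_cancel_left]
      exact mem_zpowers _
    · rw [conj_pow_eq_pow_of_conj_eq_pow hcon]
      exact npow_mem_zpowers _ _

theorem index_zpowers_eq [(zpowers a).Normal] (hgen : closure {a, b} = ⊤) {s : ℕ}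
    (hb : ∀ j : ℕ, b ^ j ∈ zpowers a ↔ s ∣ j) : (zpowers a).index = s := by
  set π := QuotientGroup.mk' (zpowers a)
  have hπa : π a = 1 := (QuotientGroup.eq_one_iff a).mpr (mem_zpowers a)
  have hπb : ∀ j : ℕ, π b ^ j = 1 ↔ s ∣ j := fun j => by
    rw [← map_pow, QuotientGroup.mk'_apply, QuotientGroup.eq_one_iff, hb]
  have htop : zpowers (π b) = ⊤ := by
    rw [zpowers_eq_closure (π b), ← closure_insert_one, ← hπa]
    exact closure_pair_map_eq_top (QuotientGroup.mk'_surjective _) hgen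
  have hord : orderOf (π b) = s :=
    Nat.dvd_antisymm (orderOf_dvd_of_pow_eq_one ((hπb s).mpr dvd_rfl))
      ((hπb _).mp (pow_orderOf_eq_one _))
  rw [index_eq_card, ← card_top, ← htop, Nat.card_zpowers, hord]

theorem pow_sub_one_eq_commutatorElement (hr : 0 < r) (hcon : b⁻¹ * a * b = a ^ r) :
    a ^ (r - 1) = ⁅a⁻¹, b⁻¹⁆ := by
  rw [commutatorElement_def, inv_inv, inv_inv, mul_assoc, mul_assoc, ← mul_assoc b⁻¹, hcon,
    ← mul_pow_sub_one hr.ne', inv_mul_cancel_left]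

theorem commutator_eq_zpowers_pow_sub_one [Finite G] (hgen : closure {a, b} = ⊤) (hr : 0 < r)
    (hcon : b⁻¹ * a * b = a ^ r) : commutator G = zpowers (a ^ (r - 1)) := by
  have hmem : a ^ (r - 1) ∈ commutator G := by
    rw [pow_sub_one_eq_commutatorElement hr hcon, _root_.commutator_def]
    exact commutator_mem_commutator (mem_top _) (mem_top _)
  refine le_antisymm ?_ (zpowers_le.mpr hmem)
  have := normal_zpowers_pow hgen hcon (r - 1)
  set ρ := QuotientGroup.mk' (zpowers (a ^ (r - 1)))
  have hρ : ∀ g, ρ g = 1 ↔ g ∈ zpowers (a ^ (r - 1)) := QuotientGroup.eq_one_iff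
  have hab : Commute (ρ a) (ρ b) := by
    rw [← Commute.inv_inv_iff, ← commutatorElement_eq_one_iff_commute, ← map_inv, ← map_inv,
      ← map_commutatorElement, hρ, ← pow_sub_one_eq_commutatorElement hr hcon]
    exact mem_zpowers _
  have hcomm := commute_of_closure_pair_eq_top
    (closure_pair_map_eq_top (QuotientGroup.mk'_surjective _) hgen) hab
  rw [_root_.commutator_def, commutator_le]
  intro g _ h _
  rw [← hρ, map_commutatorElement, commutatorElement_eq_one_iff_commute]
  exact hcomm _ _

end

theorem card_abelianization_general {G : Type*} [Group G] [Fintype G]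
    (m s r : ℕ) (hr : 0 < r)
    (a b : G) (hgen : Subgroup.closure ({a, b} : Set G) = ⊤)
    (hcon : b⁻¹ * a * b = a ^ r)
    (horda : orderOf a = m)
    (hordb : ∀ j : ℕ, b ^ j ∈ Subgroup.zpowers a ↔ s ∣ j) :
    Nat.card (G ⧸ commutator G) = Nat.gcd m (r - 1) * s ∧
      Nat.card ((Subgroup.zpowers a).map (QuotientGroup.mk' (commutator G))) =
        Nat.gcd m (r - 1) := by
  have : (zpowers a).Normal := pow_one a ▸ normal_zpowers_pow hgen hcon 1
  have hindex : (zpowers a).index = s := index_zpowers_eq hgen hordb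
  have hspos : 0 < s := hindex ▸ Nat.pos_of_ne_zero index_ne_zero_of_finite
  have hcomm := commutator_eq_zpowers_pow_sub_one hgen hr hcon
  have hmpos : 0 < m := horda ▸ orderOf_pos a
  have hd : Nat.gcd m (r - 1) ∣ m := Nat.gcd_dvd_left _ _
  have hcard_comm : Nat.card (commutator G) = m / Nat.gcd m (r - 1) := by
    rw [hcomm, Nat.card_zpowers, orderOf_pow, horda]
  have hquot : Nat.card (G ⧸ commutator G) = Nat.gcd m (r - 1) * s := by
    refine Nat.eq_of_mul_eq_mul_right
      (Nat.div_pos (Nat.le_of_dvd hmpos hd) (Nat.gcd_pos_of_pos_left _ hmpos)) ?_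
    have := card_eq_card_quotient_mul_card_subgroup (commutator G)
    rw [← index_mul_card (zpowers a), hindex, Nat.card_zpowers, horda, hcard_comm] at this
    rw [← this, mul_comm _ s, mul_assoc, Nat.mul_div_cancel' hd]
  refine ⟨hquot, Nat.eq_of_mul_eq_mul_right hspos ?_⟩
  have hker : (QuotientGroup.mk' (commutator G)).ker ≤ zpowers a := by
    rw [QuotientGroup.ker_mk', hcomm, zpowers_le]
    exact npow_mem_zpowers a _
  rw [← hquot, ← hindex, ← (zpowers a).index_map_eq (QuotientGroup.mk'_surjective _) hker, card_mul_index]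

/-- The abelianization of the metacyclic group
`G = ⟨a, b | a^m = 1, b^s = a^t, b⁻¹ab = a^r⟩` has cardinality `gcd m (r−1) · s`, and the
image of `⟨a⟩` in `G/G'` has cardinality `gcd m (r−1)`. -/
theorem card_abelianization {G : Type*} [Group G] [Fintype G]
    (m s t r : ℕ) (hm : 0 < m) (hs : 0 < s) (ht : 0 < t) (hr : 0 < r)
    (hrsm : r ^ s ≡ 1 [MOD m]) (hmt : m ∣ t * (r - 1))
    (a b : G) (hgen : Subgroup.closure ({a, b} : Set G) = ⊤)
    (ham : a ^ m = 1) (hba : b ^ s = a ^ t) (hcon : b⁻¹ * a * b = a ^ r)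
    (horda : orderOf a = m)
    (hordb : ∀ j : ℕ, b ^ j ∈ Subgroup.zpowers a ↔ s ∣ j) :
    Nat.card (G ⧸ commutator G) = Nat.gcd m (r - 1) * s ∧
      Nat.card ((Subgroup.zpowers a).map (QuotientGroup.mk' (commutator G))) =
        Nat.gcd m (r - 1) :=
  card_abelianization_general m s r hr a b hgen hcon horda hordb
end

section
/- If gcd(m, r−1) divides t, then there exists an integer z such that a^z normalizes the subgroup ⟨b⟩ and (a^z)⁻¹·b·a^z = b^{s+1}; in particular b^s ∈ [⟨b⟩, N_G(⟨b⟩)]. -/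
/-!
Conjugating `b` by `a ^ z` gives `b * a ^ (z * (1 - r))`, because `b⁻¹ a b = a ^ r`. By Bézout,
`gcd(m, r - 1) ∣ t` lets us choose `z` with `z * (1 - r) ≡ t (mod m)`, so the conjugate is
`b * a ^ t = b ^ (s + 1)`. Conjugating the other way gives `b * (b ^ s)⁻¹`, so `a ^ z` normalizes
`⟨b⟩`, and `b ^ s = ⁅b⁻¹, (a ^ z)⁻¹⁆` is a commutator of `⟨b⟩` with its normalizer.
-/

open Subgroup
open scoped commutatorElement

theorem Nat.exists_mul_intModEq_of_gcd_dvd {m u t : ℕ} (h : Nat.gcd m u ∣ t) :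
    ∃ z : ℤ, z * u ≡ t [ZMOD m] := by
  obtain ⟨k, rfl⟩ := h
  refine ⟨k * Nat.gcdB m u, Int.modEq_iff_dvd.mpr ⟨k * Nat.gcdA m u, ?_⟩⟩
  push_cast [Nat.gcd_eq_gcd_ab]
  ring

section Group

variable {G : Type*} [Group G]

theorem zpow_mul_mul_inv_eq_of_inv_mul_mul {a b : G} {r : ℤ} (hcon : b⁻¹ * a * b = a ^ r)
    (z : ℤ) : a ^ z * b * (a ^ z)⁻¹ = b * a ^ (z * (r - 1)) := by
  have hconj : b⁻¹ * a ^ z * b = a ^ (r * z) := by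
    simpa [hcon, zpow_mul] using (conj_zpow (a := b⁻¹) (b := a) (i := z)).symm
  calc a ^ z * b * (a ^ z)⁻¹ = b * (b⁻¹ * a ^ z * b) * a ^ (-z) := by group
    _ = b * a ^ (z * (r - 1)) := by rw [hconj, mul_assoc, ← zpow_add]; ring_nf

theorem conj_mem_zpowers_of_conj_mem {x b h : G} (hx : x * b * x⁻¹ ∈ zpowers b)
    (hh : h ∈ zpowers b) : x * h * x⁻¹ ∈ zpowers b := by
  obtain ⟨n, rfl⟩ := hh
  rw [← conj_zpow]
  exact zpow_mem hx n

theorem mem_normalizer_zpowers_of_conj_mem_s13 {x b : G} (h₁ : x * b * x⁻¹ ∈ zpowers b)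
    (h₂ : x⁻¹ * b * x ∈ zpowers b) : x ∈ normalizer (zpowers b : Set G) := by
  refine mem_normalizer_iff.mpr fun h ↦ ⟨conj_mem_zpowers_of_conj_mem h₁, fun hh ↦ ?_⟩
  simpa [mul_assoc] using conj_mem_zpowers_of_conj_mem (x := x⁻¹) (by rwa [inv_inv]) hh

theorem commutatorElement_inv_inv_eq_pow {x b : G} {n : ℕ} (h : x⁻¹ * b * x = b ^ (n + 1)) :
    ⁅b⁻¹, x⁻¹⁆ = b ^ n := by
  rw [commutatorElement_def, inv_inv, inv_inv, mul_assoc b⁻¹, mul_assoc b⁻¹, h, pow_succ',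
    inv_mul_cancel_left]

end Group

theorem exists_normalizing_power_general {G : Type*} [Group G]
    (m s t r : ℕ) (hr : 0 < r)
    (a b : G)
    (ham : a ^ m = 1) (hba : b ^ s = a ^ t) (hcon : b⁻¹ * a * b = a ^ r)
    (hdvd : Nat.gcd m (r - 1) ∣ t) :
    (∃ z : ℤ, a ^ z ∈ Subgroup.normalizer (Subgroup.zpowers b : Set G) ∧
        (a ^ z)⁻¹ * b * a ^ z = b ^ (s + 1)) ∧
      b ^ s ∈ ⁅Subgroup.zpowers b, Subgroup.normalizer (Subgroup.zpowers b : Set G)⁆ := by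
  obtain ⟨z, hz⟩ := Nat.exists_mul_intModEq_of_gcd_dvd hdvd
  rw [Nat.cast_sub hr, Nat.cast_one] at hz
  have hat : a ^ (z * (r - 1)) = a ^ (t : ℤ) :=
    zpow_eq_zpow_iff_modEq.mpr <|
      hz.of_dvd (Int.natCast_dvd_natCast.mpr (orderOf_dvd_of_pow_eq_one ham))
  have hconj := zpow_mul_mul_inv_eq_of_inv_mul_mul (a := a) (b := b) (r := r)
    (by rwa [zpow_natCast])
  have hinv : (a ^ (-z))⁻¹ * b * a ^ (-z) = b ^ (s + 1) := by
    rw [zpow_neg, inv_inv, hconj, hat, zpow_natCast, ← hba, pow_succ']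
  have hnorm : a ^ (-z) ∈ normalizer (zpowers b : Set G) := by
    refine mem_normalizer_zpowers_of_conj_mem_s13 ?_ (hinv ▸ pow_mem (mem_zpowers b) _)
    rw [hconj, neg_mul, zpow_neg, hat, zpow_natCast, ← hba]
    exact mul_mem (mem_zpowers b) (inv_mem (pow_mem (mem_zpowers b) s))
  refine ⟨⟨-z, hnorm, hinv⟩, ?_⟩
  rw [← commutatorElement_inv_inv_eq_pow hinv]
  exact commutator_mem_commutator (inv_mem (mem_zpowers b)) (inv_mem hnorm)

/-- In the metacyclic group `G = ⟨a, b | a^m = 1, b^s = a^t, b⁻¹ab = a^r⟩`,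
if `gcd m (r−1) ∣ t` then there is an integer `z` such that `a^z` normalizes `⟨b⟩` and
`(a^z)⁻¹ · b · a^z = b^{s+1}`; in particular `b^s ∈ [⟨b⟩, N_G(⟨b⟩)]`. -/
theorem exists_normalizing_power {G : Type*} [Group G] [Fintype G]
    (m s t r : ℕ) (hm : 0 < m) (hs : 0 < s) (ht : 0 < t) (hr : 0 < r)
    (hrsm : r ^ s ≡ 1 [MOD m]) (hmt : m ∣ t * (r - 1))
    (a b : G) (hgen : Subgroup.closure ({a, b} : Set G) = ⊤)
    (ham : a ^ m = 1) (hba : b ^ s = a ^ t) (hcon : b⁻¹ * a * b = a ^ r)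
    (horda : orderOf a = m)
    (hordb : ∀ j : ℕ, b ^ j ∈ Subgroup.zpowers a ↔ s ∣ j)
    (hdvd : Nat.gcd m (r - 1) ∣ t) :
    (∃ z : ℤ, a ^ z ∈ Subgroup.normalizer (Subgroup.zpowers b : Set G) ∧
        (a ^ z)⁻¹ * b * a ^ z = b ^ (s + 1)) ∧
      b ^ s ∈ ⁅Subgroup.zpowers b, Subgroup.normalizer (Subgroup.zpowers b : Set G)⁆ :=
  exists_normalizing_power_general m s t r hr a b ham hba hcon hdvd
end

section
/- Let G be a finite group with subgroups N, H, V, U satisfying: N is normal in G, N ∩ H = 1, NH = G; V is normal in G, V ∩ U = 1, VU = N and U ≤ N; U is contained in the centralizer of H in G; and G' ∩ N = V. Then the abelianization G/G' is isomorphic to the direct product U × (H/H'). -/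
/-!
The map `U × H^ab → G^ab`, `(u, [h]) ↦ [u h]`, is an isomorphism. It is onto because every
element of `G` factors as `v u h` with `v ∈ V ≤ G'`. It is one-to-one because the projection
`G → H` along the normal complement `N` kills `u` and induces a left inverse of `H^ab → G^ab`,
so `[u h] = 1` forces `[h] = 1` and then `u ∈ G' ∩ U = G' ∩ N ∩ U = V ∩ U = 1`.
-/

open scoped Pointwise

namespace Subgroup.IsComplement'

variable {G : Type*} [Group G] {N H : Subgroup G} [N.Normal] (hc : N.IsComplement' H)

noncomputable def projection : G →* H :=
  hc.symm.QuotientMulEquiv.toMonoidHom.comp (QuotientGroup.mk' N)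

theorem projection_comp_subtype :
    hc.projection.comp H.subtype = MonoidHom.id H := by
  ext h
  exact congrArg Subtype.val (hc.symm.QuotientMulEquiv.apply_symm_apply h)

theorem projection_eq_one_of_mem {n : G} (hn : n ∈ N) :
    hc.projection n = 1 := by
  change hc.symm.QuotientMulEquiv (QuotientGroup.mk n) = 1
  rw [(QuotientGroup.eq_one_iff n).mpr hn, map_one]

end Subgroup.IsComplement'

section

variable {G : Type*} [Group G] {N H U V : Subgroup G}

noncomputable def abelianizationProdHom (U H : Subgroup G) :
    U × Abelianization H →* Abelianization G :=
  (Abelianization.of.comp U.subtype).coprod (Abelianization.map H.subtype)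

theorem abelianizationProdHom_injective [N.Normal] (hc : N.IsComplement' H) (hUN : U ≤ N)
    (hU : commutator G ⊓ U = ⊥) : Function.Injective (abelianizationProdHom U H) := by
  rw [injective_iff_map_eq_one]
  rintro ⟨u, a⟩ h
  have ha : a = 1 := by
    simpa [abelianizationProdHom, hc.projection_eq_one_of_mem (hUN u.2),
      hc.projection_comp_subtype] using congrArg (Abelianization.map hc.projection) h
  subst ha
  have hu : (u : G) ∈ commutator G ⊓ U := by
    refine ⟨Abelianization.ker_of G ▸ MonoidHom.mem_ker.mpr ?_, u.2⟩
    simpa [abelianizationProdHom] using h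
  rw [hU, Subgroup.mem_bot] at hu
  exact Prod.ext (Subtype.ext hu) rfl

theorem abelianizationProdHom_surjective (hNH : (N : Set G) * (H : Set G) = Set.univ)
    (hVU : (V : Set G) * (U : Set G) = N) (hV : V ≤ commutator G) :
    Function.Surjective (abelianizationProdHom U H) := by
  rintro ⟨g⟩
  obtain ⟨n, hn, h, hh, rfl⟩ : g ∈ (N : Set G) * (H : Set G) := hNH ▸ Set.mem_univ g
  obtain ⟨v, hv, u, hu, rfl⟩ : n ∈ (V : Set G) * (U : Set G) := hVU ▸ hn
  have hv1 : Abelianization.of v = 1 := by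
    rw [← MonoidHom.mem_ker, Abelianization.ker_of]; exact hV hv
  refine ⟨(⟨u, hu⟩, Abelianization.of ⟨h, hh⟩), ?_⟩
  change _ = Abelianization.of (v * u * h)
  simp [abelianizationProdHom, hv1]

end

theorem abelianization_iso_of_hall_decomposition_general {G : Type*} [Group G]
    (N H V U : Subgroup G)
    (hNn : N.Normal) (hNH : N ⊓ H = ⊥) (hNHtop : (N : Set G) * (H : Set G) = Set.univ)
    (hVU : V ⊓ U = ⊥) (hUN : U ≤ N)
    (hVUN : (V : Set G) * (U : Set G) = (N : Set G))
    (hGN : commutator G ⊓ N = V) :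
    Nonempty ((G ⧸ commutator G) ≃* (U × (H ⧸ commutator H))) := by
  have hc : N.IsComplement' H :=
    Subgroup.isComplement'_of_disjoint_and_mul_eq_univ (disjoint_iff.mpr hNH) hNHtop
  have hVG : V ≤ commutator G := hGN ▸ inf_le_left
  have hUG : commutator G ⊓ U = ⊥ := by
    rw [← inf_eq_right.mpr hUN, ← inf_assoc, hGN, hVU]
  exact ⟨(MulEquiv.ofBijective _ ⟨abelianizationProdHom_injective hc hUN hUG,
    abelianizationProdHom_surjective hNHtop hVUN hVG⟩).symm⟩

/-- Let `G` be a finite group with subgroups `N, H, V, U` such that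
`G = N ⋊ H` (internally), `N = V ⋊ U` with `V` normal in `G` and `U ≤ N`, `U` centralizes
`H`, and `G' ∩ N = V`. Then the abelianization `G/G'` is isomorphic to `U × (H/H')`. -/
theorem abelianization_iso_of_hall_decomposition {G : Type*} [Group G] [Fintype G]
    (N H V U : Subgroup G)
    (hNn : N.Normal) (hNH : N ⊓ H = ⊥) (hNHtop : (N : Set G) * (H : Set G) = Set.univ)
    (hVn : V.Normal) (hVU : V ⊓ U = ⊥) (hUN : U ≤ N)
    (hVUN : (V : Set G) * (U : Set G) = (N : Set G))
    (hUC : U ≤ Subgroup.centralizer (H : Set G))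
    (hGN : commutator G ⊓ N = V) :
    Nonempty ((G ⧸ commutator G) ≃* (U × (H ⧸ commutator H))) :=
  abelianization_iso_of_hall_decomposition_general N H V U hNn hNH hNHtop hVU hUN hVUN hGN
end
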